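/- Converse for the surrogate BES source coding problem: any (k, M, d, ε) code for the ternary memoryless source with P(0) = P(1) = (1 − δ)/2, P(?) = δ, binary reproduction alphabet, and separable surrogate distortion d̄ (with d̄(0,0) = d̄(1,1) = 0, d̄(0,1) = d̄(1,0) = 1, d̄(?,0) = d̄(?,1) = 1/2) must satisfy ε ≥ Σ_{j=0}^{⌊2kd⌋} C(k, j)·δ^j·(1 − δ)^{k−j} · max( 0, 1 − M·2^{−(k−j)}·⟨k−j choose ≤ ⌊kd − j/2⌋⟩ ), where ⟨n choose ≤ m⟩ = Σ_{i=0}^{m} C(n, i), with the conventions ⟨n choose ≤ m⟩ = 0 if m < 0 and ⟨n choose ≤ m⟩ = 2^n if m > n. -/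

import Mathlib

open scoped BigOperators

noncomputable section

/-- The ternary source on `{0, 1, ?}` (erasure symbol `none`):
`P(0) = P(1) = (1−δ)/2`, `P(?) = δ`. -/
def P3 (δ : ℝ) : Option Bool → ℝ :=
  fun x => if x = none then δ else (1 - δ) / 2

/-- The surrogate distortion of the erased-fair-coin-flips problem:
`d̄(0,0) = d̄(1,1) = 0`, `d̄(0,1) = d̄(1,0) = 1`, `d̄(?, z) = 1/2`. -/
def dbarBes : Option Bool → Bool → ℝ :=
  fun x z => match x with
    | none => 1 / 2
    | some b => if b = z then 0 else 1

/-- Sum of binomial coefficients `⟨n choose ≤ m⟩ = Σ_{i=0}^{m} C(n,i)`, with the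
conventions that it is `0` for `m < 0` and `2^n` for `m > n`. -/
def binosum (n : ℕ) (m : ℤ) : ℕ :=
  ∑ i ∈ Finset.range (n + 1), if (i : ℤ) ≤ m then n.choose i else 0

/-- Excess-distortion probability of the code `(f, c)` at blocklength `k`,
distortion threshold `d`, for the ternary memoryless source `P3 δ` and the separable
surrogate distortion `dbarBes`. -/
def excessBes (δ d : ℝ) (k M : ℕ) (f : (Fin k → Option Bool) → Fin M)
    (c : Fin M → (Fin k → Bool)) : ℝ :=
  ∑ x : Fin k → Option Bool, (∏ i, P3 δ (x i)) *
    (if d < (∑ i, dbarBes (x i) (c (f x) i)) / k then (1:ℝ) else 0)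

/-!
Split the source sequences by their erasure set `S`, with `j = #S`. Every sequence in the fiber of
`S` has probability `δ ^ j ((1 - δ) / 2) ^ (k - j)`, and its distortion against a codeword `w` is
`j / 2` plus its number of flips of `w` off `S`; so it is reproduced within distortion `d` only if
it lies in the Hamming ball of radius `⌊k d - j / 2⌋` around one of the `M` codewords. Such a ball
holds `⟨k - j choose ≤ ⌊k d - j / 2⌋⟩` of the `2 ^ (k - j)` sequences of the fiber, and all the
others are in excess. Summing over `S` gives the bound with `j` running up to `k`; the summands are
nonnegative, so cutting the sum at `⌊2 k d⌋` only weakens it.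
-/

open Finset

section Erasures

variable {ι : Type*} [Fintype ι]

def erasures (x : ι → Option Bool) : Finset ι := {i | x i = none}

def mismatches (x : ι → Option Bool) (w : ι → Bool) : Finset ι := {i | x i = some !(w i)}

lemma sum_dbarBes (x : ι → Option Bool) (w : ι → Bool) :
    ∑ i, dbarBes (x i) (w i) = #(erasures x) / 2 + #(mismatches x w) := by
  have hterm : ∀ i, dbarBes (x i) (w i) =
      (if x i = none then 1 else 0) / 2 + (if x i = some !(w i) then 1 else 0) := by
    intro i
    rcases x i with _ | _ | _ <;> cases w i <;> simp [dbarBes]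
  simp only [hterm, sum_add_distrib, ← sum_div, sum_boole, erasures, mismatches]

variable [DecidableEq ι]

lemma prod_P3_of_erasures_eq (δ : ℝ) {x : ι → Option Bool} {S : Finset ι}
    (hx : erasures x = S) : ∏ i, P3 δ (x i) = δ ^ #S * ((1 - δ) / 2) ^ #Sᶜ := by
  have hS : ∀ i ∈ S, P3 δ (x i) = δ := by
    intro i hi
    have hxi : x i = none := by simpa [← hx, erasures] using hi
    simp [P3, hxi]
  have hSc : ∀ i ∈ Sᶜ, P3 δ (x i) = (1 - δ) / 2 := by
    intro i hi
    have hxi : x i ≠ none := by simpa [← hx, erasures] using hi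
    simp [P3, hxi]
  rw [← prod_mul_prod_compl S, prod_congr rfl hS, prod_congr rfl hSc, prod_const, prod_const]

def decodeMismatches (S T : Finset ι) (w : ι → Bool) : ι → Option Bool :=
  fun i => if i ∈ S then none else some (if i ∈ T then !(w i) else w i)

lemma erasures_decodeMismatches (S T : Finset ι) (w : ι → Bool) :
    erasures (decodeMismatches S T w) = S := by
  ext i; by_cases hi : i ∈ S <;> simp [erasures, decodeMismatches, hi]

lemma mismatches_decodeMismatches {S T : Finset ι} (hT : T ⊆ Sᶜ) (w : ι → Bool) :
    mismatches (decodeMismatches S T w) w = T := by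
  ext i
  by_cases hi : i ∈ T
  · simp [mismatches, decodeMismatches, hi, mem_compl.mp (hT hi)]
  · by_cases hiS : i ∈ S <;> simp [mismatches, decodeMismatches, hi, hiS]

lemma decodeMismatches_erasures_mismatches (x : ι → Option Bool) (w : ι → Bool) :
    decodeMismatches (erasures x) (mismatches x w) w = x := by
  funext i
  rcases hx : x i with _ | _ | _ <;> cases hw : w i <;>
    simp [decodeMismatches, erasures, mismatches, hx, hw]

lemma mismatches_subset_compl_erasures (x : ι → Option Bool) (w : ι → Bool) :
    mismatches x w ⊆ (erasures x)ᶜ := by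
  intro i; simp +contextual [mismatches, erasures]

lemma card_filter_erasures_eq_mismatches (S : Finset ι) (w : ι → Bool) (p : ℕ → Prop)
    [DecidablePred p] :
    #{x : ι → Option Bool | erasures x = S ∧ p #(mismatches x w)} = #{T ∈ Sᶜ.powerset | p #T} := by
  refine card_nbij' (mismatches · w) (decodeMismatches S · w) ?_ ?_ ?_ ?_
  · intro x hx
    obtain ⟨rfl, hp⟩ : erasures x = S ∧ p #(mismatches x w) := by simpa using hx
    simpa using ⟨mismatches_subset_compl_erasures x w, hp⟩
  · intro T hT
    simp only [coe_filter, mem_powerset, Set.mem_ofPred_eq] at hT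
    simpa [erasures_decodeMismatches, mismatches_decodeMismatches hT.1] using hT.2
  · intro x hx
    obtain ⟨rfl, -⟩ : erasures x = S ∧ p #(mismatches x w) := by simpa using hx
    exact decodeMismatches_erasures_mismatches x w
  · intro T hT
    simp only [coe_filter, mem_powerset, Set.mem_ofPred_eq] at hT
    exact mismatches_decodeMismatches hT.1 w

lemma card_filter_erasures_eq (S : Finset ι) :
    #{x : ι → Option Bool | erasures x = S} = 2 ^ #Sᶜ := by
  simpa using card_filter_erasures_eq_mismatches S (fun _ => false) (fun _ => True)

end Erasures

lemma card_powerset_filter_card_le {α : Type*} (U : Finset α) (m : ℤ) :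
    #{T ∈ U.powerset | (#T : ℤ) ≤ m} = binosum #U m := by
  rw [card_filter, sum_powerset_apply_card (fun j => if (j : ℤ) ≤ m then 1 else 0), binosum]
  simp

lemma two_pow_sub_le_card_filter_lt_mismatches {ι β : Type*} [Fintype ι] [DecidableEq ι]
    [Fintype β] (f : (ι → Option Bool) → β) (c : β → ι → Bool) (S : Finset ι) (m : ℤ) :
    (2 ^ #Sᶜ : ℝ) - Fintype.card β * binosum #Sᶜ m
      ≤ #{x | erasures x = S ∧ m < #(mismatches x (c (f x)))} := by
  classical
  have hball : ∀ b, #{x | erasures x = S ∧ (#(mismatches x (c b)) : ℤ) ≤ m} = binosum #Sᶜ m :=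
    fun b => by
      rw [card_filter_erasures_eq_mismatches S (c b) (fun t => (t : ℤ) ≤ m),
        card_powerset_filter_card_le]
  -- Each codeword covers at most a Hamming ball's worth of sequences.
  have hnear : #{x | erasures x = S ∧ (#(mismatches x (c (f x))) : ℤ) ≤ m}
      ≤ binosum #Sᶜ m * Fintype.card β := by
    refine card_le_mul_card_image_of_maps_to (f := f) (fun _ _ => mem_univ _) _ fun b _ => ?_
    rw [← hball b]
    refine card_le_card fun x hx => ?_
    simp only [mem_filter, mem_univ, true_and] at hx ⊢
    exact hx.2 ▸ hx.1
  have hsplit : #{x | erasures x = S ∧ m < #(mismatches x (c (f x)))}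
      + #{x | erasures x = S ∧ (#(mismatches x (c (f x))) : ℤ) ≤ m} = 2 ^ #Sᶜ := by
    rw [← card_filter_erasures_eq S,
      ← card_filter_add_card_filter_not (s := {x | erasures x = S})
        (fun x => m < #(mismatches x (c (f x)))),
      filter_filter, filter_filter]
    simp only [not_lt]
  have hsplit' := congrArg (Nat.cast : ℕ → ℝ) hsplit
  have hnear' : (_ : ℝ) ≤ _ := Nat.cast_le.mpr hnear
  push_cast at hsplit' hnear'
  linarith

lemma lt_sum_dbarBes_div_iff {k : ℕ} (hk : 0 < k) (d : ℝ) (x : Fin k → Option Bool)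
    (w : Fin k → Bool) :
    d < (∑ i, dbarBes (x i) (w i)) / k ↔ ⌊(k : ℝ) * d - #(erasures x) / 2⌋ < #(mismatches x w) := by
  rw [lt_div_iff₀ (by positivity), sum_dbarBes, Int.floor_lt]
  push_cast
  constructor <;> intro h <;> linarith

def besConverseSummand (δ d : ℝ) (k M j : ℕ) : ℝ :=
  δ ^ j * (1 - δ) ^ (k - j) * max 0 (1 - (M : ℝ) * ((2 : ℝ) ^ (k - j))⁻¹ *
    (binosum (k - j) ⌊(k : ℝ) * d - (j : ℝ) / 2⌋ : ℝ))

lemma pow_mul_max_zero_one_sub (a t : ℝ) (n : ℕ) :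
    a ^ n * max 0 (1 - t * (2 ^ n)⁻¹) = (a / 2) ^ n * max 0 (2 ^ n - t) := by
  have h2n : (0 : ℝ) < 2 ^ n := by positivity
  rw [div_pow, div_mul_eq_mul_div, mul_div_assoc, ← max_div_div_right h2n.le, zero_div,
    sub_div, div_self h2n.ne', div_eq_mul_inv]

lemma besConverseSummand_le_sum_erasures_eq {δ : ℝ} (hδ0 : 0 ≤ δ) (hδ1 : δ ≤ 1) (d : ℝ)
    {k M : ℕ} (hk : 0 < k) (f : (Fin k → Option Bool) → Fin M) (c : Fin M → Fin k → Bool)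
    (S : Finset (Fin k)) :
    besConverseSummand δ d k M #S ≤ ∑ x with erasures x = S, (∏ i, P3 δ (x i)) *
      (if d < (∑ i, dbarBes (x i) (c (f x) i)) / k then (1 : ℝ) else 0) := by
  set m := ⌊(k : ℝ) * d - #S / 2⌋
  have hSc : #Sᶜ = k - #S := by rw [card_compl, Fintype.card_fin]
  have hterm : ∀ x ∈ ({x | erasures x = S} : Finset (Fin k → Option Bool)),
      (∏ i, P3 δ (x i)) * (if d < (∑ i, dbarBes (x i) (c (f x) i)) / k then (1 : ℝ) else 0)
        = δ ^ #S * ((1 - δ) / 2) ^ #Sᶜ * if m < #(mismatches x (c (f x))) then 1 else 0 := by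
    intro x hx
    rw [mem_filter] at hx
    simp only [prod_P3_of_erasures_eq δ hx.2, lt_sum_dbarBes_div_iff hk, hx.2, m]
  have hcount := two_pow_sub_le_card_filter_lt_mismatches f c S m
  rw [Fintype.card_fin] at hcount
  rw [sum_congr rfl hterm, ← mul_sum, sum_boole, filter_filter, besConverseSummand, mul_assoc,
    mul_right_comm (M : ℝ), pow_mul_max_zero_one_sub, ← hSc, mul_assoc]
  gcongr
  exact max_le (Nat.cast_nonneg _) hcount

lemma besConverseSummand_nonneg {δ : ℝ} (hδ0 : 0 ≤ δ) (hδ1 : δ ≤ 1) (d : ℝ) (k M j : ℕ) :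
    0 ≤ besConverseSummand δ d k M j :=
  mul_nonneg (mul_nonneg (pow_nonneg hδ0 _) (pow_nonneg (sub_nonneg.2 hδ1) _)) (le_max_left _ _)

lemma sum_choose_mul_besConverseSummand_le_excessBes {δ : ℝ} (hδ0 : 0 ≤ δ) (hδ1 : δ ≤ 1)
    (d : ℝ) {k M : ℕ} (hk : 0 < k) (f : (Fin k → Option Bool) → Fin M)
    (c : Fin M → Fin k → Bool) :
    ∑ j ∈ range (k + 1), k.choose j * besConverseSummand δ d k M j ≤ excessBes δ d k M f c :=
  calc ∑ j ∈ range (k + 1), k.choose j * besConverseSummand δ d k M j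
      = ∑ S : Finset (Fin k), besConverseSummand δ d k M #S := by
        rw [← powerset_univ, sum_powerset_apply_card, card_univ, Fintype.card_fin]
        simp only [nsmul_eq_mul]
    _ ≤ ∑ S : Finset (Fin k), ∑ x with erasures x = S, (∏ i, P3 δ (x i)) *
          (if d < (∑ i, dbarBes (x i) (c (f x) i)) / k then (1 : ℝ) else 0) :=
        sum_le_sum fun S _ => besConverseSummand_le_sum_erasures_eq hδ0 hδ1 d hk f c S
    _ = excessBes δ d k M f c := by rw [excessBes, sum_fiberwise]

lemma sum_range_choose_mul_le_sum_range_succ {t : ℕ → ℝ} (ht : ∀ j, 0 ≤ t j) (k N : ℕ) :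
    ∑ j ∈ range N, k.choose j * t j ≤ ∑ j ∈ range (k + 1), k.choose j * t j :=
  calc ∑ j ∈ range N, k.choose j * t j
      ≤ ∑ j ∈ range (max N (k + 1)), k.choose j * t j :=
        sum_le_sum_of_subset_of_nonneg (range_subset_range.2 (le_max_left _ _))
          fun j _ _ => mul_nonneg (Nat.cast_nonneg _) (ht j)
    _ = ∑ j ∈ range (k + 1), k.choose j * t j := by
        refine (sum_subset (range_subset_range.2 (le_max_right _ _)) fun j _ hj => ?_).symm
        rw [Nat.choose_eq_zero_of_lt (by simpa using hj), Nat.cast_zero, zero_mul]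

theorem converse_surrogate_BES_general
    (δ d ε : ℝ) (hδ0 : 0 < δ) (hδ1 : δ < 1)
    (k M : ℕ) (hk : 0 < k)
    (f : (Fin k → Option Bool) → Fin M) (c : Fin M → (Fin k → Bool))
    (hcode : excessBes δ d k M f c ≤ ε) :
    ε ≥ ∑ j ∈ Finset.range ((⌊2 * (k : ℝ) * d⌋).toNat + 1),
          (k.choose j : ℝ) * δ ^ j * (1 - δ) ^ (k - j) *
            max 0 (1 - (M : ℝ) * ((2 : ℝ) ^ (k - j))⁻¹ *
              (binosum (k - j) ⌊(k : ℝ) * d - (j : ℝ) / 2⌋ : ℝ)) :=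
  calc _ = ∑ j ∈ range ((⌊2 * (k : ℝ) * d⌋).toNat + 1),
          k.choose j * besConverseSummand δ d k M j := by
        simp only [besConverseSummand, mul_assoc]
    _ ≤ ∑ j ∈ range (k + 1), k.choose j * besConverseSummand δ d k M j :=
        sum_range_choose_mul_le_sum_range_succ
          (besConverseSummand_nonneg hδ0.le hδ1.le d k M) k _
    _ ≤ excessBes δ d k M f c :=
        sum_choose_mul_besConverseSummand_le_excessBes hδ0.le hδ1.le d hk f c
    _ ≤ ε := hcode

/-- **Converse for the surrogate BES source coding problem** (Theorem 6):
any `(k, M, d, ε)` code for the ternary memoryless source with binary reproduction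
alphabet and surrogate distortion `d̄` must satisfy
`ε ≥ Σ_{j=0}^{⌊2kd⌋} C(k,j) δ^j (1−δ)^{k−j} · max(0, 1 − M 2^{−(k−j)} ⟨k−j choose ≤ ⌊kd − j/2⌋⟩)`. -/
theorem converse_surrogate_BES
    (δ d ε : ℝ) (hδ0 : 0 < δ) (hδ1 : δ < 1) (hd : 0 ≤ d)
    (k M : ℕ) (hk : 0 < k) (hM : 0 < M)
    (f : (Fin k → Option Bool) → Fin M) (c : Fin M → (Fin k → Bool))
    (hcode : excessBes δ d k M f c ≤ ε) :
    ε ≥ ∑ j ∈ Finset.range ((⌊2 * (k : ℝ) * d⌋).toNat + 1),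
          (k.choose j : ℝ) * δ ^ j * (1 - δ) ^ (k - j) *
            max 0 (1 - (M : ℝ) * ((2 : ℝ) ^ (k - j))⁻¹ *
              (binosum (k - j) ⌊(k : ℝ) * d - (j : ℝ) / 2⌋ : ℝ)) :=
  converse_surrogate_BES_general δ d ε hδ0 hδ1 k M hk f c hcode
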